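/- Let $A, B, X \in \mathbb{M}_n$ be such that the block matrix $M = \begin{bmatrix} A & X \\ X^* & B \end{bmatrix} \in \mathbb{M}_{2n}$ is positive semi-definite. Then $\| M \|_{\infty} \le \| A + B \|_{\infty} + 2 w(X)$, where $\|\cdot\|_{\infty}$ is the operator norm and $w(X)$ is the numerical radius of $X$. -/

import Mathlib

open Matrix
open scoped ComplexOrder

/-- The absolute value `|Z| = (Zᴴ Z)^(1/2)` of a square complex matrix. -/
noncomputable def matAbs {m : Type*} [Fintype m] [DecidableEq m]
    (Z : Matrix m m ℂ) : Matrix m m ℂ :=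
  (Matrix.posSemidef_conjTranspose_mul_self Z).1.eigenvectorUnitary.1 *
    Matrix.diagonal ((↑) ∘ Real.sqrt ∘ (Matrix.posSemidef_conjTranspose_mul_self Z).1.eigenvalues) *
    (star (Matrix.posSemidef_conjTranspose_mul_self Z).1.eigenvectorUnitary : Matrix m m ℂ)

/-- Functional calculus: apply `f : ℝ → ℝ` to the eigenvalues of a Hermitian matrix
(junk value `0` if the matrix is not Hermitian). -/
noncomputable def hermApply {m : Type*} [Fintype m] [DecidableEq m]
    (f : ℝ → ℝ) (S : Matrix m m ℂ) : Matrix m m ℂ :=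
  if hS : S.IsHermitian then
    (hS.eigenvectorUnitary : Matrix m m ℂ) *
      Matrix.diagonal (fun i => (f (hS.eigenvalues i) : ℂ)) *
      (star (hS.eigenvectorUnitary : Matrix m m ℂ))
  else 0

/-- Real power of a positive semi-definite matrix by functional calculus. -/
noncomputable def matPow {m : Type*} [Fintype m] [DecidableEq m]
    (S : Matrix m m ℂ) (p : ℝ) : Matrix m m ℂ :=
  hermApply (fun x => x ^ p) S

/-- A symmetric (unitarily invariant) norm on complex `m × m` matrices. -/
structure IsSymmetricNorm {m : Type*} [Fintype m] [DecidableEq m]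
    (N : Matrix m m ℂ → ℝ) : Prop where
  add_le : ∀ A B, N (A + B) ≤ N A + N B
  smul : ∀ (c : ℂ) (A), N (c • A) = ‖c‖ * N A
  eq_zero_of : ∀ A, N A = 0 → A = 0
  unitary_mul_left : ∀ (U : Matrix.unitaryGroup m ℂ) (A), N (U * A) = N A
  mul_unitary_right : ∀ (U : Matrix.unitaryGroup m ℂ) (A), N (A * U) = N A

/-- Eigenvalues of a Hermitian matrix (junk value `0` if not Hermitian). -/
noncomputable def eigVals {m : Type*} [Fintype m] [DecidableEq m]
    (Z : Matrix m m ℂ) : m → ℝ :=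
  if hZ : Z.IsHermitian then hZ.eigenvalues else 0

/-- Eigenvalues of a Hermitian `n × n` matrix listed in decreasing order. -/
noncomputable def eigDown {n : ℕ} (Z : Matrix (Fin n) (Fin n) ℂ) : Fin n → ℝ :=
  fun i => (eigVals Z ∘ Tuple.sort (eigVals Z)) i.rev

/-- `Z ^ ↓`: the diagonal matrix listing the eigenvalues of `Z` in decreasing order. -/
noncomputable def downMat {n : ℕ} (Z : Matrix (Fin n) (Fin n) ℂ) : Matrix (Fin n) (Fin n) ℂ :=
  Matrix.diagonal (fun i => (eigDown Z i : ℂ))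

/-- Schatten `p`-norm. -/
noncomputable def schattenNorm {m : Type*} [Fintype m] [DecidableEq m]
    (p : ℝ) (Z : Matrix m m ℂ) : ℝ :=
  (∑ i, eigVals (matAbs Z) i ^ p) ^ (1 / p)

/-- Operator norm (largest singular value). -/
noncomputable def opNormInf {m : Type*} [Fintype m] [DecidableEq m]
    (Z : Matrix m m ℂ) : ℝ :=
  ⨆ i, Real.sqrt (eigVals (Zᴴ * Z) i)

/-- Numerical range. -/
def numRange {m : Type*} [Fintype m] (X : Matrix m m ℂ) : Set ℂ :=
  {z | ∃ x : m → ℂ, ∑ i, ‖x i‖ ^ 2 = 1 ∧ dotProduct (star x) (X *ᵥ x) = z}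

/-- Numerical radius. -/
noncomputable def numRadius {m : Type*} [Fintype m] (X : Matrix m m ℂ) : ℝ :=
  sSup ((fun z : ℂ => ‖z‖) '' numRange X)

/-! For `v = (x, y)` one has `v* M v = x* A x + y* B y + 2 Re x* X y`. Positivity of `A` and `B`
bounds `x* A x + y* B y` by `x* (A + B) x + y* (A + B) y ≤ ‖A + B‖ (‖x‖² + ‖y‖²)`, and
polarization of `X` together with the parallelogram law bounds `|x* X y|` by
`w(X) (‖x‖² + ‖y‖²)`. Since `M` is positive semi-definite, its norm is the largest value of its
quadratic form on unit vectors. -/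

open WithLp
open scoped InnerProductSpace Matrix.Norms.L2Operator

section

variable {V : Type*} [NormedAddCommGroup V] [InnerProductSpace ℂ V]

theorem norm_inner_map_le_of_norm_inner_map_self_le (T : V →ₗ[ℂ] V) {w : ℝ}
    (hT : ∀ x, ‖⟪T x, x⟫_ℂ‖ ≤ w * ‖x‖ ^ 2) (x y : V) :
    ‖⟪T y, x⟫_ℂ‖ ≤ w * (‖x‖ ^ 2 + ‖y‖ ^ 2) := by
  have hpar := parallelogram_law_with_norm ℂ x y
  have hparI := parallelogram_law_with_norm ℂ x (Complex.I • y)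
  rw [norm_smul, Complex.norm_I, one_mul] at hparI
  rw [inner_map_polarization, norm_div, Complex.norm_ofNat, div_le_iff₀ (by norm_num)]
  calc _ ≤ ‖⟪T (x + y), x + y⟫_ℂ‖ + ‖⟪T (x - y), x - y⟫_ℂ‖
        + ‖⟪T (x + Complex.I • y), x + Complex.I • y⟫_ℂ‖
        + ‖⟪T (x - Complex.I • y), x - Complex.I • y⟫_ℂ‖ := by
        refine (norm_sub_le _ _).trans (add_le_add ((norm_add_le _ _).trans
          (add_le_add (norm_sub_le _ _) ?_)) ?_) <;>
          simp only [norm_mul, Complex.norm_I, one_mul, le_refl]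
    _ ≤ w * ‖x + y‖ ^ 2 + w * ‖x - y‖ ^ 2 + w * ‖x + Complex.I • y‖ ^ 2
        + w * ‖x - Complex.I • y‖ ^ 2 := by gcongr <;> apply hT
    _ = _ := by linear_combination w * hpar + w * hparI

end

namespace Matrix

variable {m : Type*} [Fintype m] [DecidableEq m]

theorem IsHermitian.l2_opNorm_eq {H : Matrix m m ℂ} (hH : H.IsHermitian) :
    ‖H‖ = ‖(fun i ↦ (hH.eigenvalues i : ℂ))‖ := by
  conv_lhs => rw [hH.spectral_theorem]
  rw [Unitary.conjStarAlgAut_apply, ← Unitary.coe_star, CStarRing.norm_mul_coe_unitary,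
    CStarRing.norm_coe_unitary_mul, l2_opNorm_diagonal]
  rfl

theorem _root_.opNormInf_eq_l2_opNorm (Z : Matrix m m ℂ) : opNormInf Z = ‖Z‖ := by
  have hZ := posSemidef_conjTranspose_mul_self Z
  have hnorm := hZ.isHermitian.l2_opNorm_eq
  rw [l2_opNorm_conjTranspose_mul_self] at hnorm
  have eigen_eq (i : m) : ‖(hZ.isHermitian.eigenvalues i : ℂ)‖ = hZ.isHermitian.eigenvalues i := by
    rw [Complex.norm_real, Real.norm_of_nonneg (hZ.eigenvalues_nonneg i)]
  unfold opNormInf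
  rw [eigVals, dif_pos hZ.isHermitian]
  refine le_antisymm (Real.iSup_le (fun i ↦ ?_) (norm_nonneg Z)) ?_
  · rw [Real.sqrt_le_left (norm_nonneg Z), ← eigen_eq, sq, hnorm]
    exact norm_le_pi_norm (fun i ↦ (hZ.isHermitian.eigenvalues i : ℂ)) i
  · have hr : 0 ≤ ⨆ i, √(hZ.isHermitian.eigenvalues i) :=
      Real.iSup_nonneg fun _ ↦ Real.sqrt_nonneg _
    rw [mul_self_le_mul_self_iff (norm_nonneg Z) hr, hnorm,
      pi_norm_le_iff_of_nonneg (mul_self_nonneg _)]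
    intro i
    rw [eigen_eq, ← Real.mul_self_sqrt (hZ.eigenvalues_nonneg i)]
    have hi := le_ciSup (Set.finite_range fun i ↦ √(hZ.isHermitian.eigenvalues i)).bddAbove i
    exact mul_self_le_mul_self (Real.sqrt_nonneg _) hi

theorem star_dotProduct_mulVec_eq_inner (X : Matrix m m ℂ) (x y : m → ℂ) :
    star y ⬝ᵥ (X *ᵥ x) = ⟪toLp 2 y, toEuclideanCLM (𝕜 := ℂ) X (toLp 2 x)⟫_ℂ := by
  rw [toEuclideanCLM_toLp, EuclideanSpace.inner_toLp_toLp, dotProduct_comm]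

theorem norm_star_dotProduct_mulVec_le (P : Matrix m m ℂ) (x : m → ℂ) :
    ‖star x ⬝ᵥ (P *ᵥ x)‖ ≤ ‖P‖ * ‖toLp 2 x‖ ^ 2 := by
  rw [star_dotProduct_mulVec_eq_inner]
  calc _ ≤ ‖toLp 2 x‖ * ‖toEuclideanCLM (𝕜 := ℂ) P (toLp 2 x)‖ := norm_inner_le_norm _ _
    _ ≤ ‖toLp 2 x‖ * (‖P‖ * ‖toLp 2 x‖) := by
        gcongr; exact (toEuclideanCLM (𝕜 := ℂ) P).le_opNorm _
    _ = ‖P‖ * ‖toLp 2 x‖ ^ 2 := by ring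

theorem PosSemidef.l2_opNorm_le {M : Matrix m m ℂ} (hM : M.PosSemidef) {c : ℝ} (hc : 0 ≤ c)
    (h : ∀ x : m → ℂ, (star x ⬝ᵥ (M *ᵥ x)).re ≤ c * ‖toLp 2 x‖ ^ 2) : ‖M‖ ≤ c := by
  have hsymm : (toEuclideanCLM (𝕜 := ℂ) M : EuclideanSpace ℂ m →ₗ[ℂ] _).IsSymmetric := by
    rw [coe_toEuclideanCLM_eq_toEuclideanLin]
    exact isSymmetric_toEuclideanLin_iff.mpr hM.isHermitian
  rw [cstar_norm_def, ContinuousLinearMap.norm_eq_iSup_rayleighQuotient _ hsymm]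
  refine Real.iSup_le (fun x ↦ ?_) hc
  have hre : RCLike.re ⟪toEuclideanCLM (𝕜 := ℂ) M x, x⟫_ℂ
      = RCLike.re (star x.ofLp ⬝ᵥ (M *ᵥ x.ofLp)) := by
    rw [← inner_conj_symm, RCLike.conj_re, star_dotProduct_mulVec_eq_inner, toLp_ofLp]
  have hnonneg := hM.re_dotProduct_nonneg x.ofLp
  have hle := h x.ofLp
  rw [toLp_ofLp] at hle
  rw [ContinuousLinearMap.rayleighQuotient, ContinuousLinearMap.reApplyInnerSelf_apply, hre,
    abs_div, abs_of_nonneg hnonneg, abs_sq]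
  exact div_le_of_le_mul₀ (sq_nonneg _) hc hle

end Matrix

section

variable {m : Type*} [Fintype m]

theorem numRadius_nonneg (X : Matrix m m ℂ) : 0 ≤ numRadius X :=
  Real.sSup_nonneg <| by rintro _ ⟨z, -, rfl⟩; exact norm_nonneg z

variable [DecidableEq m]

theorem norm_le_l2_opNorm_of_mem_numRange {X : Matrix m m ℂ} {z : ℂ} (hz : z ∈ numRange X) :
    ‖z‖ ≤ ‖X‖ := by
  obtain ⟨x, hx, rfl⟩ := hz
  have hx' : ‖toLp 2 x‖ ^ 2 = 1 := by rw [EuclideanSpace.norm_sq_eq, ← hx]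
  simpa [hx'] using norm_star_dotProduct_mulVec_le X x

theorem norm_star_dotProduct_mulVec_self_le_numRadius (X : Matrix m m ℂ) (x : m → ℂ) :
    ‖star x ⬝ᵥ (X *ᵥ x)‖ ≤ numRadius X * ‖toLp 2 x‖ ^ 2 := by
  have hbdd : BddAbove ((fun z : ℂ ↦ ‖z‖) '' numRange X) :=
    ⟨‖X‖, by rintro _ ⟨z, hz, rfl⟩; exact norm_le_l2_opNorm_of_mem_numRange hz⟩
  obtain hx | hx := eq_or_ne x 0
  · simp [hx]
  set r := ‖toLp 2 x‖
  have hr : 0 < r := norm_pos_iff.mpr (by simpa using hx)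
  set u := ((r : ℂ)⁻¹) • x
  have hu : ∑ i, ‖u i‖ ^ 2 = 1 := by
    rw [← EuclideanSpace.norm_sq_eq (toLp 2 u), toLp_smul, norm_smul, norm_inv, Complex.norm_real,
      Real.norm_of_nonneg hr.le, inv_mul_cancel₀ hr.ne', one_pow]
  have hxu : star x ⬝ᵥ (X *ᵥ x) = (r : ℂ) ^ 2 * (star u ⬝ᵥ (X *ᵥ u)) := by
    have hr' : (r : ℂ) ≠ 0 := Complex.ofReal_ne_zero.mpr hr.ne'
    simp only [u, star_smul, mulVec_smul, smul_dotProduct, dotProduct_smul, smul_eq_mul,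
      star_inv₀, Complex.star_def, Complex.conj_ofReal]
    field_simp
  rw [hxu, norm_mul, norm_pow, Complex.norm_real, Real.norm_of_nonneg hr.le, mul_comm]
  gcongr
  exact le_csSup hbdd ⟨_, ⟨u, hu, rfl⟩, rfl⟩

theorem norm_star_dotProduct_mulVec_le_numRadius (X : Matrix m m ℂ) (x y : m → ℂ) :
    ‖star x ⬝ᵥ (X *ᵥ y)‖ ≤ numRadius X * (‖toLp 2 x‖ ^ 2 + ‖toLp 2 y‖ ^ 2) := by
  let T : EuclideanSpace ℂ m →ₗ[ℂ] EuclideanSpace ℂ m := toEuclideanCLM (𝕜 := ℂ) X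
  have hT (v : EuclideanSpace ℂ m) : ‖⟪T v, v⟫_ℂ‖ ≤ numRadius X * ‖v‖ ^ 2 := by
    have hv := norm_star_dotProduct_mulVec_self_le_numRadius X v.ofLp
    rwa [star_dotProduct_mulVec_eq_inner, toLp_ofLp, norm_inner_symm] at hv
  rw [star_dotProduct_mulVec_eq_inner, norm_inner_symm]
  exact norm_inner_map_le_of_norm_inner_map_self_le T hT _ _

end

section

variable {m n : Type*} [Fintype m] [Fintype n]

theorem Matrix.re_star_dotProduct_fromBlocks_mulVec (A : Matrix m m ℂ) (X : Matrix m n ℂ)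
    (B : Matrix n n ℂ) (x : m → ℂ) (y : n → ℂ) :
    (star (Sum.elim x y) ⬝ᵥ (fromBlocks A X Xᴴ B *ᵥ Sum.elim x y)).re
      = (star x ⬝ᵥ (A *ᵥ x)).re + (star y ⬝ᵥ (B *ᵥ y)).re + 2 * (star x ⬝ᵥ (X *ᵥ y)).re := by
  have hconj : star y ⬝ᵥ (Xᴴ *ᵥ x) = star (star x ⬝ᵥ (X *ᵥ y)) := by
    rw [star_dotProduct, star_mulVec, conjTranspose_conjTranspose, ← dotProduct_mulVec]
  rw [Function.star_sumElim, fromBlocks_mulVec, sumElim_dotProduct_sumElim, dotProduct_add,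
    dotProduct_add, Sum.elim_comp_inl, Sum.elim_comp_inr, hconj]
  simp only [Complex.add_re, Complex.star_def, Complex.conj_re]
  ring

theorem EuclideanSpace.norm_toLp_sumElim_sq {𝕜 : Type*} [RCLike 𝕜] (x : m → 𝕜) (y : n → 𝕜) :
    ‖toLp 2 (Sum.elim x y)‖ ^ 2 = ‖toLp 2 x‖ ^ 2 + ‖toLp 2 y‖ ^ 2 := by
  simp only [EuclideanSpace.norm_sq_eq, Fintype.sum_sum_type, Sum.elim_inl, Sum.elim_inr]

end

theorem two_numradius_opnorm_bound {n : ℕ} (A B X : Matrix (Fin n) (Fin n) ℂ)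
    (hM : (Matrix.fromBlocks A X Xᴴ B).PosSemidef) :
    opNormInf (Matrix.fromBlocks A X Xᴴ B) ≤ opNormInf (A + B) + 2 * numRadius X := by
  have hA : A.PosSemidef := hM.submatrix Sum.inl
  have hB : B.PosSemidef := hM.submatrix Sum.inr
  have hc : 0 ≤ ‖A + B‖ + 2 * numRadius X := by have := numRadius_nonneg X; positivity
  rw [opNormInf_eq_l2_opNorm, opNormInf_eq_l2_opNorm]
  refine hM.l2_opNorm_le hc fun v ↦ ?_
  obtain ⟨x, y, rfl⟩ : ∃ x y, v = Sum.elim x y :=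
    ⟨v ∘ Sum.inl, v ∘ Sum.inr, (Sum.elim_comp_inl_inr v).symm⟩
  have hAB (z : Fin n → ℂ) :
      (star z ⬝ᵥ (A *ᵥ z)).re + (star z ⬝ᵥ (B *ᵥ z)).re ≤ ‖A + B‖ * ‖toLp 2 z‖ ^ 2 := by
    rw [← Complex.add_re, ← dotProduct_add, ← add_mulVec]
    exact (Complex.re_le_norm _).trans (norm_star_dotProduct_mulVec_le _ z)
  have hX := (Complex.re_le_norm _).trans (norm_star_dotProduct_mulVec_le_numRadius X x y)
  rw [re_star_dotProduct_fromBlocks_mulVec, EuclideanSpace.norm_toLp_sumElim_sq]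
  have hAy : 0 ≤ (star y ⬝ᵥ (A *ᵥ y)).re := hA.re_dotProduct_nonneg y
  have hBx : 0 ≤ (star x ⬝ᵥ (B *ᵥ x)).re := hB.re_dotProduct_nonneg x
  linarith [hAB x, hAB y]
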